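/- Let σ = Σᵢ μᵢ|ηᵢ⟩⟨ηᵢ| be a full-rank density matrix with eigenvalues μᵢ > 0 and H a Hermitian operator. Define the Hermitian matrix h with entries h_{ij} = −(2√(μᵢμⱼ)/(μᵢ+μⱼ))·⟨ηⱼ|H|ηᵢ⟩. Then the operator norm satisfies ‖h‖ ≤ ‖H‖. -/

import Mathlib

open scoped BigOperators ComplexConjugate ComplexOrder Matrix

noncomputable section

/-- The rank-one projector `|ψ⟩⟨ψ|` as a matrix. -/
def projv {ι : Type*} [Fintype ι] (ψ : ι → ℂ) : Matrix ι ι ℂ :=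
  Matrix.vecMulVec ψ (star ψ)

/-- The inner product `⟨ψ|φ⟩`. -/
def ipc {ι : Type*} [Fintype ι] (ψ φ : ι → ℂ) : ℂ :=
  dotProduct (star ψ) φ

-- Square root of a positive semidefinite matrix (junk value `0` otherwise).
open Classical in
def msqrt {ι : Type*} [Fintype ι] [DecidableEq ι] (A : Matrix ι ι ℂ) : Matrix ι ι ℂ :=
  if h : A.PosSemidef then
    (h.1.eigenvectorUnitary : Matrix ι ι ℂ) *
      Matrix.diagonal (((↑) : ℝ → ℂ) ∘ (√·) ∘ h.1.eigenvalues) *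
      (star h.1.eigenvectorUnitary : Matrix ι ι ℂ)
  else 0

/-- Trace norm `‖X‖₁ = Tr √(X†X)`. -/
def traceNorm {ι : Type*} [Fintype ι] [DecidableEq ι] (A : Matrix ι ι ℂ) : ℝ :=
  (msqrt (Aᴴ * A)).trace.re

/-- Uhlmann fidelity `F(ρ,σ) = Tr √(√σ ρ √σ)`. -/
def fid {ι : Type*} [Fintype ι] [DecidableEq ι] (ρ σ : Matrix ι ι ℂ) : ℝ :=
  (msqrt (msqrt σ * ρ * msqrt σ)).trace.re

/-- Operator (spectral) norm of a matrix. -/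
def opNorm {ι : Type*} [Fintype ι] [DecidableEq ι] (A : Matrix ι ι ℂ) : ℝ :=
  ‖Matrix.toEuclideanCLM (𝕜 := ℂ) A‖

/-- Expectation value `⟨ψ|H|ψ⟩` (real part). -/
def exval {ι : Type*} [Fintype ι] (ψ : ι → ℂ) (H : Matrix ι ι ℂ) : ℝ :=
  (ipc ψ (H.mulVec ψ)).re

/-- Pure-state quantum Fisher information `4(⟨H²⟩ - ⟨H⟩²)`. -/
def QFIpure {ι : Type*} [Fintype ι] (ψ : ι → ℂ) (H : Matrix ι ι ℂ) : ℝ :=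
  4 * (exval ψ (H * H) - (exval ψ H) ^ 2)

/-- Density matrix predicate. -/
def IsDensity {ι : Type*} [Fintype ι] [DecidableEq ι] (ρ : Matrix ι ι ℂ) : Prop :=
  ρ.PosSemidef ∧ ρ.trace = 1

/-!
Write `h = -(K ⊙ M)` where `M = E Hᵀ Eᴴ` is the transposed matrix of `H` in the orthonormal
basis `η` (so `‖M‖ = ‖H‖`) and `K i j = 2√(μᵢμⱼ)/(μᵢ+μⱼ) = ∫₀^∞ gᵢ gⱼ` for the unit vectors
`gᵢ t = √(2μᵢ) e^{-μᵢ t}` of `L²(0, ∞)`. With `D_t = diag (gᵢ t)` this gives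
`⟪y, (K ⊙ M) x⟫ = ∫ ⟪D_t y, M D_t x⟫ dt`, and bounding the integrand by
`‖M‖ (‖D_t y‖² + ‖D_t x‖²) / 2` integrates to `‖M‖ (‖y‖² + ‖x‖²) / 2`. So a Gram kernel with unit
diagonal is a contractive Schur multiplier, whence `‖h‖ ≤ ‖M‖ = ‖H‖`.
-/

open MeasureTheory Set Real Matrix
open scoped Matrix.Norms.L2Operator InnerProductSpace

section GramKernel

variable {ι α : Type*} [Fintype ι]

def weightVec (g : ι → α → ℝ) (t : α) (x : EuclideanSpace ℂ ι) : EuclideanSpace ℂ ι :=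
  WithLp.toLp 2 fun i => (g i t : ℂ) * x i

lemma norm_weightVec_sq (g : ι → α → ℝ) (t : α) (x : EuclideanSpace ℂ ι) :
    ‖weightVec g t x‖ ^ 2 = ∑ i, g i t ^ 2 * ‖x i‖ ^ 2 := by
  simp [weightVec, EuclideanSpace.norm_sq_eq, mul_pow]

variable [DecidableEq ι]

lemma inner_toEuclideanCLM_eq_sum (A : Matrix ι ι ℂ) (x y : EuclideanSpace ℂ ι) :
    ⟪y, toEuclideanCLM (𝕜 := ℂ) A x⟫_ℂ = ∑ i, ∑ j, conj (y i) * A i j * x j := by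
  simp only [PiLp.inner_apply, ofLp_toEuclideanCLM, mulVec, dotProduct, RCLike.inner_apply,
    Finset.sum_mul]
  exact Finset.sum_congr rfl fun i _ => Finset.sum_congr rfl fun j _ => by ring

lemma norm_inner_weightVec_le (g : ι → α → ℝ) (t : α) (M : Matrix ι ι ℂ)
    (x y : EuclideanSpace ℂ ι) :
    ‖⟪weightVec g t y, toEuclideanCLM (𝕜 := ℂ) M (weightVec g t x)⟫_ℂ‖ ≤
      ‖M‖ / 2 * ∑ i, g i t ^ 2 * (‖y i‖ ^ 2 + ‖x i‖ ^ 2) := by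
  set u := weightVec g t y
  set v := weightVec g t x
  have hCS : ‖⟪u, toEuclideanCLM (𝕜 := ℂ) M v⟫_ℂ‖ ≤ ‖M‖ * (‖u‖ * ‖v‖) :=
    calc _ ≤ ‖u‖ * ‖toEuclideanCLM (𝕜 := ℂ) M v‖ := norm_inner_le_norm _ _
      _ ≤ ‖u‖ * (‖M‖ * ‖v‖) := by gcongr; exact (toEuclideanCLM (𝕜 := ℂ) M).le_opNorm v
      _ = _ := by ring
  have hAMGM : ‖u‖ * ‖v‖ ≤ (‖u‖ ^ 2 + ‖v‖ ^ 2) / 2 := by nlinarith [sq_nonneg (‖u‖ - ‖v‖)]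
  calc _ ≤ ‖M‖ * ((‖u‖ ^ 2 + ‖v‖ ^ 2) / 2) := hCS.trans (by gcongr)
    _ = _ := by
      rw [norm_weightVec_sq, norm_weightVec_sq, ← Finset.sum_add_distrib]
      simp only [mul_add]; ring

variable [MeasurableSpace α]

def gramKernel (ν : Measure α) (g : ι → α → ℝ) : Matrix ι ι ℂ :=
  of fun i j => ((∫ t, g i t * g j t ∂ν : ℝ) : ℂ)

lemma inner_hadamard_gramKernel_eq_integral {ν : Measure α} {g : ι → α → ℝ}
    (hg : ∀ i j, Integrable (fun t => g i t * g j t) ν) (M : Matrix ι ι ℂ)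
    (x y : EuclideanSpace ℂ ι) :
    ⟪y, toEuclideanCLM (𝕜 := ℂ) (gramKernel ν g ⊙ M) x⟫_ℂ =
      ∫ t, ⟪weightVec g t y, toEuclideanCLM (𝕜 := ℂ) M (weightVec g t x)⟫_ℂ ∂ν := by
  have hint : ∀ i j, Integrable
      (fun t => ((g i t * g j t : ℝ) : ℂ) * (conj (y i) * M i j * x j)) ν :=
    fun i j => (hg i j).ofReal.mul_const _
  have hpt : ∀ t, ⟪weightVec g t y, toEuclideanCLM (𝕜 := ℂ) M (weightVec g t x)⟫_ℂ =
      ∑ i, ∑ j, ((g i t * g j t : ℝ) : ℂ) * (conj (y i) * M i j * x j) := fun t => by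
    rw [inner_toEuclideanCLM_eq_sum]
    refine Finset.sum_congr rfl fun i _ => Finset.sum_congr rfl fun j _ => ?_
    simp only [weightVec, map_mul, Complex.conj_ofReal, Complex.ofReal_mul]
    ring
  simp only [hpt, inner_toEuclideanCLM_eq_sum]
  rw [integral_finsetSum _ fun i _ => integrable_finsetSum _ fun j _ => hint i j]
  refine Finset.sum_congr rfl fun i _ => ?_
  rw [integral_finsetSum _ fun j _ => hint i j]
  refine Finset.sum_congr rfl fun j _ => ?_
  rw [integral_mul_const, integral_complex_ofReal]
  simp only [gramKernel, hadamard, of_apply]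
  ring

theorem norm_hadamard_gramKernel_le {ν : Measure α} {g : ι → α → ℝ}
    (hg : ∀ i, MemLp (g i) 2 ν) (hg_norm : ∀ i, ∫ t, g i t ^ 2 ∂ν = 1) (M : Matrix ι ι ℂ) :
    ‖gramKernel ν g ⊙ M‖ ≤ ‖M‖ := by
  refine ContinuousLinearMap.opNorm_le_of_re_inner_le (norm_nonneg M) fun x y hx hy => ?_
  have hsq : ∀ i, Integrable (fun t => g i t ^ 2) ν := fun i => (hg i).integrable_sq
  have hbound : ∫ t, ‖M‖ / 2 * ∑ i, g i t ^ 2 * (‖y i‖ ^ 2 + ‖x i‖ ^ 2) ∂ν =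
      ‖M‖ / 2 * (‖y‖ ^ 2 + ‖x‖ ^ 2) := by
    rw [integral_const_mul, integral_finsetSum _ fun i _ => (hsq i).mul_const _,
      EuclideanSpace.norm_sq_eq, EuclideanSpace.norm_sq_eq, ← Finset.sum_add_distrib]
    simp only [integral_mul_const, hg_norm, one_mul]
  calc RCLike.re ⟪toEuclideanCLM (𝕜 := ℂ) (gramKernel ν g ⊙ M) x, y⟫_ℂ
      ≤ ‖⟪y, toEuclideanCLM (𝕜 := ℂ) (gramKernel ν g ⊙ M) x⟫_ℂ‖ :=
        (RCLike.re_le_norm _).trans_eq (norm_inner_symm _ _)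
    _ = ‖∫ t, ⟪weightVec g t y, toEuclideanCLM (𝕜 := ℂ) M (weightVec g t x)⟫_ℂ ∂ν‖ := by
        rw [inner_hadamard_gramKernel_eq_integral (fun i j => (hg i).integrable_mul (hg j))]
    _ ≤ ∫ t, ‖M‖ / 2 * ∑ i, g i t ^ 2 * (‖y i‖ ^ 2 + ‖x i‖ ^ 2) ∂ν :=
        norm_integral_le_of_norm_le
          ((integrable_finsetSum _ fun i _ => (hsq i).mul_const _).const_mul _)
          (ae_of_all _ fun t => norm_inner_weightVec_le g t M x y)
    _ = ‖M‖ := by rw [hbound, hx, hy]; ring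

end GramKernel

section ExpProfile

def expProfile (a t : ℝ) : ℝ := √(2 * a) * exp (-(a * t))

lemma integral_exp_neg_mul_Ioi_zero {c : ℝ} (hc : 0 < c) :
    ∫ t in Ioi 0, exp (-(c * t)) = c⁻¹ := by
  have h := integral_exp_mul_Ioi (neg_lt_zero.2 hc) 0
  simp only [neg_mul, mul_zero, exp_zero] at h
  rw [h, neg_div_neg_eq, one_div]

lemma expProfile_mul_expProfile {a : ℝ} (ha : 0 ≤ a) (b t : ℝ) :
    expProfile a t * expProfile b t = 2 * √(a * b) * exp (-((a + b) * t)) := by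
  have h4 : √(2 * a) * √(2 * b) = 2 * √(a * b) := by
    rw [← sqrt_mul (by positivity), show 2 * a * (2 * b) = 2 ^ 2 * (a * b) by ring,
      sqrt_mul (by positivity), sqrt_sq zero_le_two]
  rw [expProfile, expProfile, mul_mul_mul_comm, h4, ← exp_add]
  ring_nf

lemma integrableOn_expProfile_mul {a b : ℝ} (ha : 0 < a) (hb : 0 < b) :
    IntegrableOn (fun t => expProfile a t * expProfile b t) (Ioi 0) := by
  simp_rw [expProfile_mul_expProfile ha.le b, ← neg_mul]
  exact (integrableOn_exp_mul_Ioi (by linarith) 0).const_mul _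

lemma integral_expProfile_mul {a b : ℝ} (ha : 0 < a) (hb : 0 < b) :
    ∫ t in Ioi 0, expProfile a t * expProfile b t = 2 * √(a * b) / (a + b) := by
  simp_rw [expProfile_mul_expProfile ha.le b]
  rw [integral_const_mul, integral_exp_neg_mul_Ioi_zero (by linarith), div_eq_mul_inv]

lemma memLp_expProfile {a : ℝ} (ha : 0 < a) :
    MemLp (expProfile a) 2 (volume.restrict (Ioi 0)) := by
  have hcont : Continuous (expProfile a) := by unfold expProfile; fun_prop
  refine (memLp_two_iff_integrable_sq hcont.aestronglyMeasurable).2 ?_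
  simp_rw [sq]
  exact integrableOn_expProfile_mul ha ha

lemma integral_expProfile_sq {a : ℝ} (ha : 0 < a) : ∫ t in Ioi 0, expProfile a t ^ 2 = 1 := by
  simp_rw [sq]
  rw [integral_expProfile_mul ha ha, sqrt_mul_self ha.le]
  field_simp
  ring

end ExpProfile

lemma EuclideanSpace.norm_toLp_star {𝕜 ι : Type*} [RCLike 𝕜] [Fintype ι] (v : ι → 𝕜) :
    ‖WithLp.toLp 2 (star v)‖ = ‖WithLp.toLp 2 v‖ := by
  simp [EuclideanSpace.norm_eq]

namespace Matrix

variable {𝕜 m n : Type*} [RCLike 𝕜] [Fintype m] [Fintype n] [DecidableEq n]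

lemma l2_opNorm_map_star_le (A : Matrix m n 𝕜) : ‖A.map star‖ ≤ ‖A‖ := by
  rw [l2_opNorm_def (A.map star)]
  refine ContinuousLinearMap.opNorm_le_bound _ (norm_nonneg _) fun x => ?_
  have hmul : A.map star *ᵥ x.ofLp = star (A *ᵥ star x.ofLp) := by
    ext i
    simp [mulVec, dotProduct]
  change ‖WithLp.toLp 2 (A.map star *ᵥ x.ofLp)‖ ≤ ‖A‖ * ‖x‖
  rw [hmul, EuclideanSpace.norm_toLp_star]
  simpa [EuclideanSpace.norm_toLp_star] using l2_opNorm_mulVec A (WithLp.toLp 2 (star x.ofLp))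

lemma l2_opNorm_transpose [DecidableEq m] (A : Matrix m n 𝕜) : ‖Aᵀ‖ = ‖A‖ := by
  have hT : Aᵀ = (A.map star)ᴴ := by ext; simp
  refine hT ▸ (l2_opNorm_conjTranspose _).trans (le_antisymm (l2_opNorm_map_star_le A) ?_)
  simpa [Function.comp_def] using l2_opNorm_map_star_le (A.map star)

end Matrix

section OrthonormalRows

variable {ι : Type*} [Fintype ι]

lemma of_ipc_mulVec_eq_mul_transpose_mul (η : ι → ι → ℂ) (H : Matrix ι ι ℂ) :
    (of fun i j => ipc (η j) (H *ᵥ η i)) = of η * Hᵀ * (of η)ᴴ := by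
  ext i j
  simp only [ipc, of_apply, mul_apply, mulVec, dotProduct, transpose_apply, conjTranspose_apply,
    Pi.star_apply, Finset.mul_sum, Finset.sum_mul]
  exact Finset.sum_congr rfl fun k _ => Finset.sum_congr rfl fun l _ => by ring

variable [DecidableEq ι]

lemma of_mem_unitaryGroup_of_ipc {η : ι → ι → ℂ}
    (hη : ∀ i j, ipc (η i) (η j) = if i = j then 1 else 0) :
    of η ∈ unitaryGroup ι ℂ := by
  rw [mem_unitaryGroup_iff]
  ext i j
  simpa [ipc, mul_apply, dotProduct, one_apply, eq_comm, mul_comm] using hη j i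

end OrthonormalRows

theorem env_hamiltonian_norm_bound_general {n : ℕ} (μ : Fin n → ℝ) (hμ : ∀ i, 0 < μ i)
    (η : Fin n → Fin n → ℂ) (hη : ∀ i j, ipc (η i) (η j) = if i = j then 1 else 0)
    (H : Matrix (Fin n) (Fin n) ℂ) :
    opNorm (Matrix.of fun i j : Fin n =>
        ((-(2 * Real.sqrt (μ i * μ j) / (μ i + μ j)) : ℝ) : ℂ) * ipc (η j) (H.mulVec (η i)))
      ≤ opNorm H := by
  set E := of η
  set K := gramKernel (volume.restrict (Ioi 0)) fun i => expProfile (μ i)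
  have hE : E ∈ unitary (Matrix (Fin n) (Fin n) ℂ) := of_mem_unitaryGroup_of_ipc hη
  have hh : (Matrix.of fun i j : Fin n =>
        ((-(2 * Real.sqrt (μ i * μ j) / (μ i + μ j)) : ℝ) : ℂ) * ipc (η j) (H.mulVec (η i))) =
      -(K ⊙ (E * Hᵀ * Eᴴ)) := by
    rw [← of_ipc_mulVec_eq_mul_transpose_mul]
    ext i j
    simp [K, gramKernel, hadamard, integral_expProfile_mul (hμ i) (hμ j)]
  calc opNorm _ = ‖K ⊙ (E * Hᵀ * Eᴴ)‖ := by rw [hh, opNorm, ← cstar_norm_def, norm_neg]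
    _ ≤ ‖E * Hᵀ * Eᴴ‖ := norm_hadamard_gramKernel_le (fun i => memLp_expProfile (hμ i))
        (fun i => integral_expProfile_sq (hμ i)) _
    _ = ‖H‖ := by
        rw [← star_eq_conjTranspose, CStarRing.norm_mul_mem_unitary _ (Unitary.star_mem hE),
          CStarRing.norm_mem_unitary_mul _ hE, l2_opNorm_transpose]

/-- the optimal environmental Hamiltonian, with entries
`h_{ij} = −(2√(μᵢμⱼ)/(μᵢ+μⱼ)) ⟨ηⱼ|H|ηᵢ⟩` built from the eigendecomposition
`σ = Σ μᵢ|ηᵢ⟩⟨ηᵢ|` of a full-rank density matrix, satisfies `‖h‖ ≤ ‖H‖`. -/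
theorem env_hamiltonian_norm_bound {n : ℕ} (μ : Fin n → ℝ) (hμ : ∀ i, 0 < μ i)
    (hsum : ∑ i, μ i = 1)
    (η : Fin n → Fin n → ℂ) (hη : ∀ i j, ipc (η i) (η j) = if i = j then 1 else 0)
    (H : Matrix (Fin n) (Fin n) ℂ) (hH : H.IsHermitian) :
    opNorm (Matrix.of fun i j : Fin n =>
        ((-(2 * Real.sqrt (μ i * μ j) / (μ i + μ j)) : ℝ) : ℂ) * ipc (η j) (H.mulVec (η i)))
      ≤ opNorm H :=
  env_hamiltonian_norm_bound_general μ hμ η hη H
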